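/- arXiv:2511.03963 — 3 statements merged into one kernel-verified Lean document; each statement's English description precedes it below -/
import Mathlib

section
/- Let p, q : ℝ^d → (0,∞) be smooth strictly positive probability densities with scores s_p = ∇ log p and s_q = ∇ log q, let γ ≥ 0, and let f : ℝ^d → ℝ^d be a smooth compactly supported vector field. Then the expectation under p of the γ-Stein operator of q equals the inner product of the score difference with f in L²(μ_γ): ∫_{ℝ^d} p(x)·q(x)^γ·((γ+1)⟨s_q(x), f(x)⟩ + div f(x)) dx = ∫_{ℝ^d} ⟨s_q(x) − s_p(x), f(x)⟩ p(x) q(x)^γ dx. -/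
open MeasureTheory Real
open scoped RealInnerProductSpace

/-- Divergence of a vector field on `ℝ^d` (trace of the Jacobian). -/
noncomputable def divg {d : ℕ} (f : EuclideanSpace ℝ (Fin d) → EuclideanSpace ℝ (Fin d))
    (x : EuclideanSpace ℝ (Fin d)) : ℝ :=
  ∑ i, fderiv ℝ f x (EuclideanSpace.single i 1) i

/-- Score function `s_p = ∇ log p`. -/
noncomputable def score {d : ℕ} (p : EuclideanSpace ℝ (Fin d) → ℝ)
    (x : EuclideanSpace ℝ (Fin d)) : EuclideanSpace ℝ (Fin d) :=
  gradient (fun y => Real.log (p y)) x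

section Aux

variable {d : ℕ}

lemma score_inner_aux (h : EuclideanSpace ℝ (Fin d) → ℝ) (hh : ContDiff ℝ (⊤ : ℕ∞) h)
    (hpos : ∀ x, 0 < h x) (x v : EuclideanSpace ℝ (Fin d)) :
    ⟪score h x, v⟫ = (h x)⁻¹ * fderiv ℝ h x v := by
  have hd : HasFDerivAt (fun y => Real.log (h y)) ((h x)⁻¹ • fderiv ℝ h x) x :=
    (Real.hasDerivAt_log (hpos x).ne').comp_hasFDerivAt x
      (hh.differentiable (by simp) x).hasFDerivAt
  rw [score, gradient, InnerProductSpace.toDual_symm_apply, hd.fderiv]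
  simp

lemma score_cont_aux (h : EuclideanSpace ℝ (Fin d) → ℝ) (hh : ContDiff ℝ (⊤ : ℕ∞) h)
    (hpos : ∀ x, 0 < h x) : Continuous (score h) := by
  have hlog : ContDiff ℝ (⊤ : ℕ∞) fun y => Real.log (h y) := hh.log fun x => (hpos x).ne'
  have : Continuous (fderiv ℝ fun y => Real.log (h y)) :=
    (hlog.fderiv_right (m := 0) (by simp)).continuous
  exact (LinearIsometryEquiv.continuous _).comp this

lemma euclid_decomp_aux (v : EuclideanSpace ℝ (Fin d)) :
    v = ∑ i, v i • EuclideanSpace.single i 1 := by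
  ext j
  rw [WithLp.ofLp_sum, Finset.sum_apply]
  simp [EuclideanSpace.single_apply]

lemma divg_smul_aux (φ : EuclideanSpace ℝ (Fin d) → ℝ)
    (f : EuclideanSpace ℝ (Fin d) → EuclideanSpace ℝ (Fin d))
    (hφ : Differentiable ℝ φ) (hf : Differentiable ℝ f) (x : EuclideanSpace ℝ (Fin d)) :
    divg (fun y => φ y • f y) x = fderiv ℝ φ x (f x) + φ x * divg f x := by
  have hD : HasFDerivAt (fun y => φ y • f y)
      (φ x • fderiv ℝ f x + (fderiv ℝ φ x).smulRight (f x)) x :=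
    (hφ x).hasFDerivAt.smul (hf x).hasFDerivAt
  have h1 : divg (fun y => φ y • f y) x
      = ∑ i, (φ x * fderiv ℝ f x (EuclideanSpace.single i 1) i
          + fderiv ℝ φ x (EuclideanSpace.single i 1) * f x i) := by
    rw [divg]
    refine Finset.sum_congr rfl fun i _ => ?_
    rw [hD.fderiv]
    simp [ContinuousLinearMap.add_apply, ContinuousLinearMap.smul_apply,
      ContinuousLinearMap.smulRight_apply, PiLp.add_apply, PiLp.smul_apply, smul_eq_mul]
  rw [h1, Finset.sum_add_distrib, ← Finset.mul_sum]
  have h2 : ∑ i, fderiv ℝ φ x (EuclideanSpace.single i 1) * f x i = fderiv ℝ φ x (f x) := by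
    conv_rhs => rw [euclid_decomp_aux (f x)]
    rw [map_sum]
    exact Finset.sum_congr rfl fun i _ => by rw [_root_.map_smul, smul_eq_mul, mul_comm]
  rw [h2, divg]; ring

lemma fderiv_coord_aux (g : EuclideanSpace ℝ (Fin d) → EuclideanSpace ℝ (Fin d))
    (hg : Differentiable ℝ g) (x v : EuclideanSpace ℝ (Fin d)) (i : Fin d) :
    fderiv ℝ (fun y => g y i) x v = fderiv ℝ g x v i := by
  have h : HasFDerivAt (fun y => g y i)
      ((EuclideanSpace.proj (𝕜 := ℝ) i).comp (fderiv ℝ g x)) x :=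
    (EuclideanSpace.proj (𝕜 := ℝ) i).hasFDerivAt.comp x (hg x).hasFDerivAt
  rw [h.fderiv]; rfl

lemma integral_scalar_fderiv_zero_aux (g : EuclideanSpace ℝ (Fin d) → ℝ) (hg : ContDiff ℝ (⊤ : ℕ∞) g)
    (hgs : HasCompactSupport g) (v : EuclideanSpace ℝ (Fin d)) :
    ∫ x, fderiv ℝ g x v = 0 := by
  have hcont : Continuous fun x => fderiv ℝ g x v :=
    ((hg.fderiv_right (m := 0) (by simp)).continuous).clm_apply continuous_const
  have hsupp : HasCompactSupport fun x => fderiv ℝ g x v :=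
    (hgs.fderiv ℝ).comp_left (g := fun L : EuclideanSpace ℝ (Fin d) →L[ℝ] ℝ => L v) (by simp)
  have h1 : ∫ x, (fun _ => (1:ℝ)) x * fderiv ℝ g x v
      = - ∫ x, fderiv ℝ (fun _ : EuclideanSpace ℝ (Fin d) => (1:ℝ)) x v * g x := by
    apply integral_mul_fderiv_eq_neg_fderiv_mul_of_integrable
    · simp [fderiv_const]
    · simp only [one_mul]
      exact hcont.integrable_of_hasCompactSupport hsupp
    · simp only [one_mul]
      exact hg.continuous.integrable_of_hasCompactSupport hgs
    · exact fun x _ => differentiableAt_const 1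
    · exact fun x _ => hg.differentiable (by simp) x
  simpa [fderiv_const] using h1

lemma integral_divg_zero_aux (g : EuclideanSpace ℝ (Fin d) → EuclideanSpace ℝ (Fin d))
    (hg : ContDiff ℝ (⊤ : ℕ∞) g) (hgs : HasCompactSupport g) :
    ∫ x, divg g x = 0 := by
  have hgd := hg.differentiable (by simp)
  have hgi : ∀ i : Fin d, ContDiff ℝ (⊤ : ℕ∞) (fun y => g y i) := fun i =>
    (EuclideanSpace.proj (𝕜 := ℝ) i).contDiff.comp hg
  have hgsi : ∀ i : Fin d, HasCompactSupport (fun y => g y i) := fun i =>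
    hgs.comp_left (g := fun w : EuclideanSpace ℝ (Fin d) => w i) rfl
  have key : ∀ x, divg g x = ∑ i, fderiv ℝ (fun y => g y i) x (EuclideanSpace.single i 1) := by
    intro x
    unfold divg
    exact Finset.sum_congr rfl fun i _ => (fderiv_coord_aux g hgd x _ i).symm
  rw [integral_congr_ae (Filter.Eventually.of_forall key)]
  rw [integral_finset_sum]
  · exact Finset.sum_eq_zero fun i _ =>
      integral_scalar_fderiv_zero_aux _ (hgi i) (hgsi i) _
  · intro i _
    have hcont : Continuous fun x => fderiv ℝ (fun y => g y i) x (EuclideanSpace.single i 1) :=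
      (((hgi i).fderiv_right (m := 0) (by simp)).continuous).clm_apply continuous_const
    apply hcont.integrable_of_hasCompactSupport
    exact ((hgsi i).fderiv ℝ).comp_left
      (g := fun L : EuclideanSpace ℝ (Fin d) →L[ℝ] ℝ => L (EuclideanSpace.single i 1)) (by simp)

lemma divg_cont_aux (g : EuclideanSpace ℝ (Fin d) → EuclideanSpace ℝ (Fin d))
    (hg : ContDiff ℝ (⊤ : ℕ∞) g) : Continuous (divg g) := by
  apply continuous_finset_sum
  intro i _
  exact (EuclideanSpace.proj (𝕜 := ℝ) i).continuous.comp
    (((hg.fderiv_right (m := 0) (by simp)).continuous).clm_apply continuous_const)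

lemma divg_supp_aux (g : EuclideanSpace ℝ (Fin d) → EuclideanSpace ℝ (Fin d))
    (hgs : HasCompactSupport g) : HasCompactSupport (divg g) :=
  (hgs.fderiv ℝ).comp_left
    (g := fun L : EuclideanSpace ℝ (Fin d) →L[ℝ] EuclideanSpace ℝ (Fin d) =>
      ∑ i, L (EuclideanSpace.single i 1) i) (by simp)

end Aux

/-- `E_p[A_q^{(γ)} f] = ⟨s_q − s_p, f⟩_{L²(μ_γ)}` with
`μ_γ(dx) = p(x) q(x)^γ dx`. -/
theorem gamma_stein_expectation_score_difference
    (d : ℕ) (p q : EuclideanSpace ℝ (Fin d) → ℝ)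
    (hp_smooth : ContDiff ℝ (⊤ : ℕ∞) p) (hp_pos : ∀ x, 0 < p x) (hp_prob : ∫ x, p x = 1)
    (hq_smooth : ContDiff ℝ (⊤ : ℕ∞) q) (hq_pos : ∀ x, 0 < q x) (hq_prob : ∫ x, q x = 1)
    (γ : ℝ) (hγ : 0 ≤ γ)
    (f : EuclideanSpace ℝ (Fin d) → EuclideanSpace ℝ (Fin d))
    (hf_smooth : ContDiff ℝ (⊤ : ℕ∞) f) (hf_supp : HasCompactSupport f) :
    ∫ x, p x * q x ^ γ * ((γ + 1) * ⟪score q x, f x⟫ + divg f x)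
      = ∫ x, ⟪score q x - score p x, f x⟫ * (p x * q x ^ γ) := by
  set φ : EuclideanSpace ℝ (Fin d) → ℝ := fun x => p x * q x ^ γ with hφdef
  have hq_ne : ∀ x, q x ≠ 0 := fun x => (hq_pos x).ne'
  have hp_ne : ∀ x, p x ≠ 0 := fun x => (hp_pos x).ne'
  have hφ : ContDiff ℝ (⊤ : ℕ∞) φ := by
    apply hp_smooth.mul
    exact contDiff_iff_contDiffAt.mpr fun x =>
      (hq_smooth.contDiffAt).rpow_const_of_ne (hq_ne x)
  -- derivative of φ in terms of scores
  have hφ' : ∀ x v, fderiv ℝ φ x v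
      = φ x * (⟪score p x, v⟫ + γ * ⟪score q x, v⟫) := by
    intro x v
    have hqr : HasFDerivAt (fun y => q y ^ γ) ((γ * q x ^ (γ - 1)) • fderiv ℝ q x) x :=
      ((hq_smooth.differentiable (by simp) x).hasFDerivAt).rpow_const (Or.inl (hq_ne x))
    have hD : HasFDerivAt φ
        (p x • ((γ * q x ^ (γ - 1)) • fderiv ℝ q x) + (q x ^ γ) • fderiv ℝ p x) x :=
      ((hp_smooth.differentiable (by simp) x).hasFDerivAt).mul hqr
    rw [hD.fderiv]
    rw [score_inner_aux p hp_smooth hp_pos, score_inner_aux q hq_smooth hq_pos]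
    have hsub : q x ^ (γ - 1) = q x ^ γ / q x := by
      rw [Real.rpow_sub (hq_pos x), Real.rpow_one]
    simp only [ContinuousLinearMap.add_apply, ContinuousLinearMap.smul_apply, smul_eq_mul,
      hφdef, hsub]
    field_simp [hp_ne x, hq_ne x]
    ring
  -- the product vector field
  set g : EuclideanSpace ℝ (Fin d) → EuclideanSpace ℝ (Fin d) := fun x => φ x • f x with hgdef
  have hg : ContDiff ℝ (⊤ : ℕ∞) g := hφ.smul hf_smooth
  have hgs : HasCompactSupport g := hf_supp.smul_left (f := φ)
  -- pointwise identity
  have key : ∀ x, p x * q x ^ γ * ((γ + 1) * ⟪score q x, f x⟫ + divg f x)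
      = ⟪score q x - score p x, f x⟫ * (p x * q x ^ γ) + divg g x := by
    intro x
    have hdg : divg g x = fderiv ℝ φ x (f x) + φ x * divg f x :=
      divg_smul_aux φ f (hφ.differentiable (by simp)) (hf_smooth.differentiable (by simp)) x
    rw [hdg, hφ' x (f x), inner_sub_left]
    simp only [hφdef]
    ring
  rw [integral_congr_ae (Filter.Eventually.of_forall key)]
  -- integrability of the two pieces
  have hBcont : Continuous fun x => ⟪score q x - score p x, f x⟫ * (p x * q x ^ γ) := by
    have h1 : Continuous fun x => score q x - score p x :=
      (score_cont_aux q hq_smooth hq_pos).sub (score_cont_aux p hp_smooth hp_pos)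
    exact (h1.inner hf_smooth.continuous).mul hφ.continuous
  have hBsupp : HasCompactSupport
      fun x => ⟪score q x - score p x, f x⟫ * (p x * q x ^ γ) := by
    refine HasCompactSupport.mono' hf_supp ?_
    intro x hx
    by_contra h
    apply hx
    show inner ℝ (score q x - score p x) (f x) * (p x * q x ^ γ) = 0
    rw [image_eq_zero_of_notMem_tsupport h, inner_zero_right, zero_mul]
  have hB : Integrable fun x => ⟪score q x - score p x, f x⟫ * (p x * q x ^ γ) :=
    hBcont.integrable_of_hasCompactSupport hBsupp
  have hD : Integrable (divg g) :=
    (divg_cont_aux g hg).integrable_of_hasCompactSupport (divg_supp_aux g hgs)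
  rw [integral_add hB hD, integral_divg_zero_aux g hg hgs, add_zero]
end

section
/- Let p, q : ℝ^d → (0,∞) be smooth strictly positive probability densities with scores s_p = ∇ log p and s_q = ∇ log q, let w : (0,∞) → (0,∞) be continuously differentiable, and let f : ℝ^d → ℝ^d be a smooth compactly supported vector field. Define the generalized Stein operator A_q^{(w)} f(x) = (w(q(x)) + q(x)·w'(q(x)))·⟨s_q(x), f(x)⟩ + w(q(x))·div f(x). Then ∫_{ℝ^d} p(x)·A_q^{(w)} f(x) dx = ∫_{ℝ^d} ⟨s_q(x) − s_p(x), f(x)⟩ p(x) w(q(x)) dx. -/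
open MeasureTheory Real
open scoped RealInnerProductSpace

lemma clm_apply_eq_sum {d : ℕ} (L : EuclideanSpace ℝ (Fin d) →L[ℝ] ℝ)
    (v : EuclideanSpace ℝ (Fin d)) :
    L v = ∑ i, v i * L (EuclideanSpace.single i 1) := by
  have hv := (EuclideanSpace.basisFun (Fin d) ℝ).sum_repr v
  conv_lhs => rw [← hv]
  simp [smul_eq_mul, mul_comm]

lemma score_inner {d : ℕ} {p : EuclideanSpace ℝ (Fin d) → ℝ}
    (hp : ContDiff ℝ (⊤ : ℕ∞) p) (hpos : ∀ x, 0 < p x)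
    (x v : EuclideanSpace ℝ (Fin d)) :
    ⟪score p x, v⟫ = (p x)⁻¹ * fderiv ℝ p x v := by
  have hd : HasFDerivAt (fun y => Real.log (p y)) ((p x)⁻¹ • fderiv ℝ p x) x :=
    (Real.hasDerivAt_log (hpos x).ne').comp_hasFDerivAt x
      (hp.differentiable (by simp) x).hasFDerivAt
  rw [score, gradient, hd.fderiv, InnerProductSpace.toDual_symm_apply]
  simp

/-- for the generalized Stein operator
`A_q^{(w)} f(x) = (w(q(x)) + q(x)·w'(q(x)))⟨s_q(x), f(x)⟩ + w(q(x)) div f(x)`,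
one has `∫ p · A_q^{(w)} f = ∫ ⟨s_q − s_p, f⟩ p w(q)`. -/
theorem generalized_stein_expectation
    (d : ℕ) (p q : EuclideanSpace ℝ (Fin d) → ℝ)
    (hp_smooth : ContDiff ℝ (⊤ : ℕ∞) p) (hp_pos : ∀ x, 0 < p x) (hp_prob : ∫ x, p x = 1)
    (hq_smooth : ContDiff ℝ (⊤ : ℕ∞) q) (hq_pos : ∀ x, 0 < q x) (hq_prob : ∫ x, q x = 1)
    (w : ℝ → ℝ) (hw_diff : ContDiffOn ℝ 1 w (Set.Ioi 0)) (hw_pos : ∀ t > 0, 0 < w t)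
    (f : EuclideanSpace ℝ (Fin d) → EuclideanSpace ℝ (Fin d))
    (hf_smooth : ContDiff ℝ (⊤ : ℕ∞) f) (hf_supp : HasCompactSupport f) :
    ∫ x, p x * ((w (q x) + q x * deriv w (q x)) * ⟪score q x, f x⟫ + w (q x) * divg f x)
      = ∫ x, ⟪score q x - score p x, f x⟫ * (p x * w (q x)) := by
  classical
  set e : Fin d → EuclideanSpace ℝ (Fin d) := fun i => EuclideanSpace.single i 1 with he
  have hq1 : ContDiff ℝ 1 q := hq_smooth.of_le (by simp)
  have hp1 : ContDiff ℝ 1 p := hp_smooth.of_le (by simp)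
  have hwq : ContDiff ℝ 1 (fun x => w (q x)) := by
    rw [← contDiffOn_univ]
    exact hw_diff.comp hq1.contDiffOn (fun x _ => hq_pos x)
  set g : EuclideanSpace ℝ (Fin d) → ℝ := fun x => p x * w (q x) with hg_def
  have hg : ContDiff ℝ 1 g := hp1.mul hwq
  have hgd : Differentiable ℝ g := hg.differentiable one_ne_zero
  -- product rule for g
  have hgder : ∀ x, fderiv ℝ g x
      = p x • (deriv w (q x) • fderiv ℝ q x) + w (q x) • fderiv ℝ p x := by
    intro x
    have hwd : HasDerivAt w (deriv w (q x)) (q x) :=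
      ((hw_diff.contDiffAt (isOpen_Ioi.mem_nhds (hq_pos x))).differentiableAt
        one_ne_zero).hasDerivAt
    have hq' : HasFDerivAt q (fderiv ℝ q x) x := (hq1.differentiable one_ne_zero x).hasFDerivAt
    have hp' : HasFDerivAt p (fderiv ℝ p x) x := (hp1.differentiable one_ne_zero x).hasFDerivAt
    have hwq' : HasFDerivAt (fun y => w (q y)) (deriv w (q x) • fderiv ℝ q x) x :=
      hwd.comp_hasFDerivAt x hq'
    exact (hp'.mul hwq').fderiv
  -- derivative of coordinate functions of f
  have hfd : Differentiable ℝ f := hf_smooth.differentiable (by simp)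
  have hfi_der : ∀ (i : Fin d) x, HasFDerivAt (fun y => f y i)
      ((EuclideanSpace.proj i).comp (fderiv ℝ f x)) x := fun i x =>
    (EuclideanSpace.proj (𝕜 := ℝ) i).hasFDerivAt.comp x (hfd x).hasFDerivAt
  have hfi_fderiv : ∀ (i : Fin d) x,
      fderiv ℝ (fun y => f y i) x = (EuclideanSpace.proj i).comp (fderiv ℝ f x) :=
    fun i x => (hfi_der i x).fderiv
  -- continuity facts
  have hfc : Continuous f := hf_smooth.continuous
  have hf'c : Continuous (fderiv ℝ f) := hf_smooth.continuous_fderiv (by simp)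
  have hg'c : Continuous (fderiv ℝ g) := hg.continuous_fderiv one_ne_zero
  have hgc : Continuous g := hg.continuous
  have hdivc : Continuous (divg f) := by
    refine continuous_finset_sum _ fun i _ => ?_
    exact (EuclideanSpace.proj (𝕜 := ℝ) i).continuous.comp
      (hf'c.clm_apply continuous_const)
  -- vanishing outside tsupport f
  have hfz : ∀ x ∉ tsupport f, f x = 0 := fun x hx => image_eq_zero_of_notMem_tsupport hx
  have hf'z : ∀ x ∉ tsupport f, fderiv ℝ f x = 0 := by
    intro x hx
    by_contra h
    exact hx (support_fderiv_subset ℝ (by simpa [Function.mem_support] using h))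
  -- integrability helper
  have hint : ∀ (h : EuclideanSpace ℝ (Fin d) → ℝ), Continuous h →
      (∀ x ∉ tsupport f, h x = 0) → Integrable h := fun h hc hz =>
    hc.integrable_of_hasCompactSupport (HasCompactSupport.intro hf_supp hz)
  have hprojc : ∀ i : Fin d, Continuous fun v : EuclideanSpace ℝ (Fin d) => v i :=
    fun i => (EuclideanSpace.proj (𝕜 := ℝ) i).continuous
  -- integrabilities per coordinate
  have IA : ∀ i : Fin d, Integrable (fun x => fderiv ℝ g x (e i) * f x i) := by
    intro i
    refine hint _ ((hg'c.clm_apply continuous_const).mul ((hprojc i).comp hfc))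
      fun x hx => by simp [hfz x hx]
  have IB : ∀ i : Fin d, Integrable (fun x => g x * fderiv ℝ f x (e i) i) := by
    intro i
    refine hint _ (hgc.mul (((hprojc i).comp (hf'c.clm_apply continuous_const))))
      fun x hx => by simp [hf'z x hx]
  have IC : ∀ i : Fin d, Integrable (fun x => g x * f x i) := by
    intro i
    exact hint _ (hgc.mul ((hprojc i).comp hfc)) fun x hx => by simp [hfz x hx]
  -- integration by parts in each direction
  have ibp : ∀ i : Fin d,
      (∫ x, g x * fderiv ℝ f x (e i) i) = - ∫ x, fderiv ℝ g x (e i) * f x i := by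
    intro i
    have h1 : (fun x => g x * fderiv ℝ f x (e i) i)
        = fun x => g x * fderiv ℝ (fun y => f y i) x (e i) := by
      funext x; rw [hfi_fderiv]; rfl
    rw [h1]
    exact integral_mul_fderiv_eq_neg_fderiv_mul_of_integrable (IA i) (h1 ▸ IB i) (IC i)
      (fun x _ => hgd x) (fun x _ => (hfi_der i x).differentiableAt)
  -- the divergence-form term integrates to zero
  have hD : (∫ x, fderiv ℝ g x (f x) + g x * divg f x) = 0 := by
    have hsum : (fun x => fderiv ℝ g x (f x) + g x * divg f x)
        = fun x => ∑ i, (fderiv ℝ g x (e i) * f x i + g x * fderiv ℝ f x (e i) i) := by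
      funext x
      rw [clm_apply_eq_sum (fderiv ℝ g x) (f x), divg, Finset.mul_sum,
        ← Finset.sum_add_distrib]
      exact Finset.sum_congr rfl fun i _ => by ring
    rw [hsum, integral_finset_sum Finset.univ
      (f := fun (i : Fin d) x => fderiv ℝ g x (e i) * f x i + g x * fderiv ℝ f x (e i) i)
      (fun i _ => (IA i).add (IB i))]
    refine Finset.sum_eq_zero fun i _ => ?_
    rw [integral_add (IA i) (IB i), ibp i, add_neg_cancel]
  -- pointwise identity for the left integrand
  have key : ∀ x, p x * ((w (q x) + q x * deriv w (q x)) * ⟪score q x, f x⟫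
        + w (q x) * divg f x)
      = (((q x)⁻¹ * fderiv ℝ q x (f x) - (p x)⁻¹ * fderiv ℝ p x (f x)) * g x)
        + (fderiv ℝ g x (f x) + g x * divg f x) := by
    intro x
    rw [score_inner hq_smooth hq_pos x (f x), hgder x]
    simp only [ContinuousLinearMap.add_apply, ContinuousLinearMap.smul_apply, smul_eq_mul,
      hg_def]
    have hq0 : q x ≠ 0 := (hq_pos x).ne'
    have hp0 : p x ≠ 0 := (hp_pos x).ne'
    field_simp
    ring
  have keyR : ∀ x, ⟪score q x - score p x, f x⟫ * g x
      = ((q x)⁻¹ * fderiv ℝ q x (f x) - (p x)⁻¹ * fderiv ℝ p x (f x)) * g x := by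
    intro x
    rw [inner_sub_left, score_inner hq_smooth hq_pos x (f x),
      score_inner hp_smooth hp_pos x (f x)]
  have IR : Integrable (fun x =>
      ((q x)⁻¹ * fderiv ℝ q x (f x) - (p x)⁻¹ * fderiv ℝ p x (f x)) * g x) := by
    refine hint _ ?_ fun x hx => by simp [hfz x hx]
    exact (((hq_smooth.continuous.inv₀ fun x => (hq_pos x).ne').mul
      ((hq1.continuous_fderiv one_ne_zero).clm_apply hfc)).sub
      ((hp_smooth.continuous.inv₀ fun x => (hp_pos x).ne').mul
      ((hp1.continuous_fderiv one_ne_zero).clm_apply hfc))).mul hgc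
  have ID : Integrable (fun x => fderiv ℝ g x (f x) + g x * divg f x) :=
    hint _ ((hg'c.clm_apply hfc).add (hgc.mul hdivc))
      fun x hx => by simp [divg, hfz x hx, hf'z x hx]
  rw [show (fun x => p x * ((w (q x) + q x * deriv w (q x)) * ⟪score q x, f x⟫
        + w (q x) * divg f x))
      = fun x => (((q x)⁻¹ * fderiv ℝ q x (f x) - (p x)⁻¹ * fderiv ℝ p x (f x)) * g x)
        + (fderiv ℝ g x (f x) + g x * divg f x) from funext key,
    integral_add IR ID, hD, add_zero]
  congr 1
  funext x
  exact (keyR x).symm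
end

section
/- Let p : ℝ^d → (0,∞) be a smooth strictly positive probability density with score s_p = ∇ log p satisfying E_p[‖s_p‖²] < ∞, and let q : ℝ^d → (0,∞) be smooth and strictly positive with score s_q = ∇ log q such that s_q and its divergence are p-integrable with appropriate decay so that ∫ div(p s_q) = 0. Then the Fisher divergence admits the score-matching decomposition: D_F(p‖q) = ∫ p(x)‖s_p(x) − s_q(x)‖² dx = ∫ p(x)(‖s_q(x)‖² + 2 ∇·s_q(x)) dx + ∫ p(x)‖s_p(x)‖² dx, where the last term does not depend on q. -/
open MeasureTheory Real
open scoped RealInnerProductSpace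

lemma gradient_apply_single {d : ℕ} (f : EuclideanSpace ℝ (Fin d) → ℝ)
    (x : EuclideanSpace ℝ (Fin d)) (i : Fin d) :
    gradient f x i = fderiv ℝ f x (EuclideanSpace.single i 1) := by
  have h : ⟪gradient f x, EuclideanSpace.single i (1 : ℝ)⟫
      = fderiv ℝ f x (EuclideanSpace.single i 1) := by
    rw [gradient, InnerProductSpace.toDual_symm_apply]
  rw [← h, EuclideanSpace.inner_single_right]
  simp

/-- `p • s_p = ∇ p`. -/
lemma smul_score {d : ℕ} (p : EuclideanSpace ℝ (Fin d) → ℝ)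
    (hp : ContDiff ℝ (⊤ : ℕ∞) p) (hp_pos : ∀ x, 0 < p x) (x : EuclideanSpace ℝ (Fin d)) :
    p x • score p x = gradient p x := by
  have hdp : DifferentiableAt ℝ p x := hp.differentiable (by simp) x
  have hlog : HasFDerivAt (fun y => Real.log (p y)) ((p x)⁻¹ • fderiv ℝ p x) x :=
    hdp.hasFDerivAt.log (hp_pos x).ne'
  have : score p x = (p x)⁻¹ • gradient p x := by
    rw [score, gradient, hlog.fderiv, gradient]
    exact _root_.map_smul ((InnerProductSpace.toDual ℝ
      (EuclideanSpace ℝ (Fin d))).symm.toLinearEquiv) _ _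
  rw [this, smul_smul, mul_inv_cancel₀ (hp_pos x).ne', one_smul]

/-- Smoothness of the score of a smooth positive function. -/
lemma score_contDiff {d : ℕ} (q : EuclideanSpace ℝ (Fin d) → ℝ)
    (hq : ContDiff ℝ (⊤ : ℕ∞) q) (hq_pos : ∀ x, 0 < q x) :
    ContDiff ℝ (⊤ : ℕ∞) (score q) := by
  have hlog : ContDiff ℝ (⊤ : ℕ∞) fun y => Real.log (q y) :=
    hq.log fun x => (hq_pos x).ne'
  have hfd : ContDiff ℝ (⊤ : ℕ∞) (fderiv ℝ fun y => Real.log (q y)) :=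
    hlog.fderiv_right (by simp)
  exact ((InnerProductSpace.toDual ℝ
    (EuclideanSpace ℝ (Fin d))).symm.contDiff).comp hfd

/-- Product rule for the divergence. -/
lemma divg_smul {d : ℕ} (p : EuclideanSpace ℝ (Fin d) → ℝ)
    (F : EuclideanSpace ℝ (Fin d) → EuclideanSpace ℝ (Fin d))
    (x : EuclideanSpace ℝ (Fin d)) (hp : DifferentiableAt ℝ p x)
    (hF : DifferentiableAt ℝ F x) :
    divg (fun y => p y • F y) x = ⟪gradient p x, F x⟫ + p x * divg F x := by
  rw [divg, divg]
  have hfd := fderiv_fun_smul hp hF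
  rw [PiLp.inner_apply]
  simp only [hfd, ContinuousLinearMap.add_apply, ContinuousLinearMap.coe_smul',
    Pi.smul_apply, ContinuousLinearMap.smulRight_apply, PiLp.add_apply, PiLp.smul_apply,
    smul_eq_mul, RCLike.inner_apply, conj_trivial]
  rw [Finset.sum_add_distrib, Finset.mul_sum, add_comm]
  congr 1
  exact Finset.sum_congr rfl fun i _ => by
    rw [gradient_apply_single, mul_comm]

/-- the score-matching decomposition of the Fisher divergence:
`∫ p ‖s_p − s_q‖² = ∫ p (‖s_q‖² + 2 ∇·s_q) + ∫ p ‖s_p‖²`,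
where the decay assumption is expressed as `∫ div(p s_q) = 0`. -/
theorem fisher_divergence_score_matching_decomposition
    (d : ℕ) (p q : EuclideanSpace ℝ (Fin d) → ℝ)
    (hp_smooth : ContDiff ℝ (⊤ : ℕ∞) p) (hp_pos : ∀ x, 0 < p x) (hp_prob : ∫ x, p x = 1)
    (hq_smooth : ContDiff ℝ (⊤ : ℕ∞) q) (hq_pos : ∀ x, 0 < q x)
    (hsp_L2 : Integrable fun x => p x * ‖score p x‖ ^ 2)
    (hsq_L2 : Integrable fun x => p x * ‖score q x‖ ^ 2)
    (hdivsq_int : Integrable fun x => p x * divg (score q) x)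
    (hcross_int : Integrable fun x => p x * ⟪score p x, score q x⟫)
    (hIBP : ∫ x, divg (fun y => p y • score q y) x = 0) :
    ∫ x, p x * ‖score p x - score q x‖ ^ 2
      = (∫ x, p x * (‖score q x‖ ^ 2 + 2 * divg (score q) x))
        + ∫ x, p x * ‖score p x‖ ^ 2 := by
  -- pointwise identity for the divergence of `p • s_q`
  have hpt : ∀ x, divg (fun y => p y • score q y) x
      = p x * ⟪score p x, score q x⟫ + p x * divg (score q) x := by
    intro x
    rw [divg_smul p (score q) x (hp_smooth.differentiable (by simp) x)
      ((score_contDiff q hq_smooth hq_pos).differentiable (by simp) x)]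
    congr 1
    rw [← smul_score p hp_smooth hp_pos x, real_inner_smul_left]
  -- integration by parts identity
  have hIBP' : (∫ x, p x * ⟪score p x, score q x⟫)
      = - ∫ x, p x * divg (score q) x := by
    have := hIBP
    rw [show (fun x => divg (fun y => p y • score q y) x)
        = fun x => p x * ⟪score p x, score q x⟫ + p x * divg (score q) x
      from funext hpt] at this
    rw [integral_add hcross_int hdivsq_int] at this
    linarith
  -- expand the square
  have hLHS : (fun x => p x * ‖score p x - score q x‖ ^ 2)
      = fun x => (p x * ‖score p x‖ ^ 2 + p x * ‖score q x‖ ^ 2)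
        - 2 * (p x * ⟪score p x, score q x⟫) := by
    funext x
    rw [norm_sub_sq_real]
    ring
  have hRHS : (fun x => p x * (‖score q x‖ ^ 2 + 2 * divg (score q) x))
      = fun x => p x * ‖score q x‖ ^ 2 + 2 * (p x * divg (score q) x) := by
    funext x; ring
  rw [hLHS, hRHS]
  have h1 : Integrable (fun x => p x * ‖score p x‖ ^ 2 + p x * ‖score q x‖ ^ 2) := by
    exact hsp_L2.add hsq_L2
  have h2 : Integrable (fun x => 2 * (p x * ⟪score p x, score q x⟫)) := by
    exact hcross_int.const_mul 2
  have h3 : Integrable (fun x => 2 * (p x * divg (score q) x)) := by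
    exact hdivsq_int.const_mul 2
  rw [integral_sub h1 h2, integral_add hsp_L2 hsq_L2, integral_const_mul,
    integral_add hsq_L2 h3, integral_const_mul, hIBP']
  ring
end
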